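/- Σ_{x ∈ 𝔽_q^{2n}} ψ(Q^{Sp}_n(x)) = χ(2)·qⁿ·G(ψ). (Equivalently, the normalized Gauss sum of the form 𝐪 attached to the symplectic group Sp_{2n} equals χ(2)·𝔫_ψ.) -/
import Mathlib

open Finset

/-- Extract the `k`-th coordinate (with 1-based subscripts `1 ≤ k ≤ N`) of a
vector `x ∈ K^N`, returning `0` for out-of-range subscripts. -/
def coordFn {K : Type*} [Zero K] (N : ℕ) (x : Fin N → K) (k : ℕ) : K :=
  if hk : 1 ≤ k ∧ k ≤ N then x ⟨k - 1, by omega⟩ else 0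

/-- The symmetric bilinear form `h^{Sp}_n` on `K^{2n}` attached to the affine generic
stratum of the symplectic group `Sp_{2n}`. -/
def hSp {K : Type*} [Field K] (n : ℕ) (x y : Fin (2 * n) → K) : K :=
  let X := coordFn (2 * n) x
  let Y := coordFn (2 * n) y
  (2 : K)⁻¹ *
    ((X 1 - X (2 * n)) * Y 1
      + ∑ i ∈ Finset.Icc 2 (2 * n), (X (2 * n + 2 - i) - X (2 * n + 1 - i)) * Y i)

section Aux

variable {F : Type} [Field F]

/-- The parametrization of `F^{2n}` by two `n`-tuples. -/
def eMap (n : ℕ) (a v : Fin n → F) : Fin (2 * n) → F :=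
  fun k => if h : (k : ℕ) < n then a ⟨k, h⟩
    else -∑ i : Fin n, (if (i : ℕ) + (k : ℕ) < 2 * n then v i else 0)

/-- Partial sums of `v`. -/
def pSum (n : ℕ) (v : Fin n → F) (j : ℕ) : F := ∑ i : Fin n, if (i : ℕ) < j then v i else 0

lemma pSum_zero (n : ℕ) (v : Fin n → F) : pSum n v 0 = 0 := by
  simp [pSum]

lemma pSum_top (n : ℕ) (v : Fin n → F) {j : ℕ} (hj : n ≤ j) : pSum n v j = ∑ i, v i := by
  refine Finset.sum_congr rfl fun i _ => if_pos (by have := i.isLt; omega)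

lemma pSum_succ_sub (n : ℕ) (v : Fin n → F) (j : ℕ) :
    pSum n v (j + 1) - pSum n v j = coordFn n v (j + 1) := by
  unfold pSum coordFn
  rw [← Finset.sum_sub_distrib]
  by_cases hj : j < n
  · rw [dif_pos ⟨by omega, by omega⟩]
    have : ∀ i : Fin n, ((if (i : ℕ) < j + 1 then v i else 0) - (if (i : ℕ) < j then v i else 0))
        = if i = ⟨j, hj⟩ then v i else 0 := by
      intro i
      rcases lt_trichotomy (i : ℕ) j with h | h | h
      · rw [if_pos (by omega), if_pos h, sub_self, if_neg (by rintro rfl; simp at h)]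
      · rw [if_pos (by omega), if_neg (by omega), sub_zero, if_pos (Fin.ext h)]
      · rw [if_neg (by omega), if_neg (by omega), sub_self, if_neg (by rintro rfl; simp at h)]
    rw [Finset.sum_congr rfl fun i _ => this i, Finset.sum_ite_eq' Finset.univ ⟨j, hj⟩ v,
      if_pos (Finset.mem_univ _)]
    congr 1
  · rw [dif_neg (by omega)]
    refine Finset.sum_eq_zero fun i _ => ?_
    have := i.isLt
    rw [if_pos (by omega), if_pos (by omega), sub_self]

lemma coordFn_val_succ {n : ℕ} (a : Fin n → F) (i : Fin n) :
    coordFn n a ((i : ℕ) + 1) = a i := by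
  have hi := i.isLt
  unfold coordFn
  rw [dif_pos ⟨by omega, by omega⟩]
  exact congrArg a (Fin.ext (by simp))

lemma coord_eMap_low {n : ℕ} (a v : Fin n → F) {m : ℕ} (hm : m ≤ n) :
    coordFn (2 * n) (eMap n a v) m = coordFn n a m := by
  unfold coordFn eMap
  by_cases h1 : 1 ≤ m
  · rw [dif_pos ⟨h1, by omega⟩, dif_pos (show ((⟨m - 1, by omega⟩ : Fin (2 * n)) : ℕ) < n by
      simp only [Fin.val_mk]; omega), dif_pos ⟨h1, hm⟩]
  · rw [dif_neg (by omega), dif_neg (by omega)]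

lemma coord_eMap_high {n : ℕ} (a v : Fin n → F) {m : ℕ} (hm1 : n < m) (hm2 : m ≤ 2 * n) :
    coordFn (2 * n) (eMap n a v) m = -pSum n v (2 * n + 1 - m) := by
  unfold coordFn eMap pSum
  rw [dif_pos ⟨by omega, hm2⟩, dif_neg (by simp only [Fin.val_mk]; omega)]
  congr 1
  refine Finset.sum_congr rfl fun i _ => if_congr ?_ rfl rfl
  simp only [Fin.val_mk]
  omega

lemma coordFn_out {K : Type*} [Zero K] (N : ℕ) (x : Fin N → K) {m : ℕ}
    (h : m = 0 ∨ N < m) : coordFn N x m = 0 := by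
  unfold coordFn
  rw [dif_neg (by omega)]

/-- The key pointwise identity. -/
lemma hSp_eMap {n : ℕ} (hn : 1 ≤ n) (h2 : (2 : F) ≠ 0) (a v : Fin n → F) :
    hSp n (eMap n a v) (eMap n a v)
      = (2 : F)⁻¹ * ((a ⟨0, hn⟩) ^ 2 + (∑ i, v i) ^ 2) + ∑ j : Fin n, a j * v j := by
  have key : ((coordFn (2*n) (eMap n a v) 1 - coordFn (2*n) (eMap n a v) (2*n))
        * coordFn (2*n) (eMap n a v) 1
      + ∑ i ∈ Finset.Icc 2 (2*n), (coordFn (2*n) (eMap n a v) (2*n+2-i)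
          - coordFn (2*n) (eMap n a v) (2*n+1-i)) * coordFn (2*n) (eMap n a v) i)
      = (a ⟨0, hn⟩) ^ 2 + (∑ i, v i) ^ 2 + 2 * ∑ j : Fin n, a j * v j := by
    set X := coordFn (2*n) (eMap n a v) with hX
    set A := coordFn n a with hA
    set V := coordFn n v with hV
    set P := pSum n v with hP
    set S := ∑ i, v i with hS
    -- coordinate facts
    have hX1 : X 1 = A 1 := coord_eMap_low a v (by omega)
    have hA1 : A 1 = a ⟨0, hn⟩ := by
      have := coordFn_val_succ a ⟨0, hn⟩
      simpa using this
    have hP1 : P 1 = V 1 := by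
      have h := pSum_succ_sub n v 0
      rw [pSum_zero] at h
      rw [← hP, ← hV] at h
      simpa using h
    have hV1 : V 1 = v ⟨0, hn⟩ := by
      have := coordFn_val_succ v ⟨0, hn⟩
      simpa using this
    have hX2n : X (2*n) = -P 1 := by
      have h := coord_eMap_high a v (show n < 2*n by omega) (le_refl (2*n))
      rw [show 2*n+1-2*n = 1 by omega] at h
      exact h
    have hXn1 : X (n+1) = -P n := by
      have h := coord_eMap_high a v (show n < n+1 by omega) (show n+1 ≤ 2*n by omega)
      rw [show 2*n+1-(n+1) = n by omega] at h
      exact h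
    have hPn : P n = S := pSum_top n v (le_refl n)
    have hPn1 : P (n+1) = S := pSum_top n v (by omega)
    -- the canonical cross sum
    set U := ∑ i ∈ Finset.Ico 1 (n+1), A i * V i with hU
    have hUfin : U = ∑ j : Fin n, a j * v j := by
      rw [hU, Finset.sum_Ico_eq_sum_range, show n+1-1 = n by omega,
        ← Fin.sum_univ_eq_sum_range (fun i => A (1+i) * V (1+i)) n]
      refine Finset.sum_congr rfl fun i _ => ?_
      rw [hA, hV, show 1+(i:ℕ) = (i:ℕ)+1 by omega, coordFn_val_succ, coordFn_val_succ]
    -- split the Icc sum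
    rw [show Finset.Icc 2 (2*n) = Finset.Ico 2 (2*n+1) from (Finset.Ico_add_one_right_eq_Icc 2 (2*n)).symm,
      ← Finset.sum_Ico_consecutive _ (show 2 ≤ n+1 by omega) (show n+1 ≤ 2*n+1 by omega)]
    -- first part
    have hSum1 : ∑ i ∈ Finset.Ico 2 (n+1), (X (2*n+2-i) - X (2*n+1-i)) * X i
        = ∑ i ∈ Finset.Ico 2 (n+1), V i * A i := by
      refine Finset.sum_congr rfl fun i hi => ?_
      rw [Finset.mem_Ico] at hi
      have e1 : X (2*n+2-i) = -P (i-1) := by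
        have h := coord_eMap_high a v (show n < 2*n+2-i by omega) (show 2*n+2-i ≤ 2*n by omega)
        rw [show 2*n+1-(2*n+2-i) = i-1 by omega] at h
        exact h
      have e2 : X (2*n+1-i) = -P i := by
        have h := coord_eMap_high a v (show n < 2*n+1-i by omega) (show 2*n+1-i ≤ 2*n by omega)
        rw [show 2*n+1-(2*n+1-i) = i by omega] at h
        exact h
      have e3 : X i = A i := coord_eMap_low a v (by omega)
      have e4 : P i - P (i-1) = V i := by
        have h := pSum_succ_sub n v (i-1)
        rw [← hP, ← hV] at h
        rwa [show i-1+1 = i by omega] at h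
      rw [e1, e2, e3, ← e4]
      ring
    -- second part: reindex
    have hSum2a : ∑ i ∈ Finset.Ico (n+1) (2*n+1), (X (2*n+2-i) - X (2*n+1-i)) * X i
        = ∑ j ∈ Finset.Ico 1 (n+1), (X (j+1) - X j) * (-P j) := by
      refine Finset.sum_nbij' (fun i => 2*n+1-i) (fun j => 2*n+1-j) ?_ ?_ ?_ ?_ ?_
      · intro i hi
        rw [Finset.mem_Ico] at hi ⊢
        omega
      · intro j hj
        rw [Finset.mem_Ico] at hj ⊢
        omega
      · intro i hi
        rw [Finset.mem_Ico] at hi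
        omega
      · intro j hj
        rw [Finset.mem_Ico] at hj
        omega
      · intro i hi
        rw [Finset.mem_Ico] at hi
        have e0 : X i = -P (2*n+1-i) := by
          have h := coord_eMap_high a v (show n < i by omega) (show i ≤ 2*n by omega)
          rw [← hP] at h
          exact h
        rw [e0, show 2*n+2-i = (2*n+1-i)+1 by omega]
    -- second part: per-term Abel decomposition
    have hSum2b : ∑ j ∈ Finset.Ico 1 (n+1), (X (j+1) - X j) * (-P j)
        = (∑ j ∈ Finset.Ico 1 (n+1), (X (j+1) * P (j+1) - X j * P j)) * (-1)
          + ∑ j ∈ Finset.Ico 1 (n+1), A (j+1) * V (j+1) := by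
      rw [Finset.sum_mul, ← Finset.sum_add_distrib]
      refine Finset.sum_congr rfl fun j hj => ?_
      rw [Finset.mem_Ico] at hj
      have e4 : P (j+1) - P j = V (j+1) := by
        have h := pSum_succ_sub n v j
        rw [← hP, ← hV] at h
        exact h
      have e5 : X (j+1) * V (j+1) = A (j+1) * V (j+1) := by
        by_cases hjn : j + 1 ≤ n
        · rw [hX, hA, coord_eMap_low a v hjn]
        · have hv0 : V (j+1) = 0 := coordFn_out n v (by omega)
          rw [hv0, mul_zero, mul_zero]
      rw [← e5, ← e4]
      ring
    -- telescoping
    have htel : ∑ j ∈ Finset.Ico 1 (n+1), (X (j+1) * P (j+1) - X j * P j)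
        = X (n+1) * P (n+1) - X 1 * P 1 := by
      rw [Finset.sum_Ico_eq_sum_range, show n+1-1 = n by omega]
      have : ∀ i ∈ Finset.range n, (X (1+i+1) * P (1+i+1) - X (1+i) * P (1+i))
          = (X ((i+1)+1) * P ((i+1)+1) - X (i+1) * P (i+1)) := by
        intro i _
        rw [show 1+i+1 = (i+1)+1 by omega, show 1+i = i+1 by omega]
      rw [Finset.sum_congr rfl this,
        Finset.sum_range_sub (fun i => X (i+1) * P (i+1)) n]
    -- the shifted cross sum
    have hU2 : ∑ j ∈ Finset.Ico 1 (n+1), A (j+1) * V (j+1) = U - A 1 * V 1 := by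
      have h1 : ∑ j ∈ Finset.Ico 1 (n+1), A (j+1) * V (j+1)
          = ∑ i ∈ Finset.range n, A ((i+1)+1) * V ((i+1)+1) := by
        rw [Finset.sum_Ico_eq_sum_range, show n+1-1 = n by omega]
        refine Finset.sum_congr rfl fun i _ => ?_
        rw [show 1+i+1 = (i+1)+1 by omega]
      have h2 : U = ∑ i ∈ Finset.range n, A (i+1) * V (i+1) := by
        rw [hU, Finset.sum_Ico_eq_sum_range, show n+1-1 = n by omega]
        refine Finset.sum_congr rfl fun i _ => ?_
        rw [show 1+i = i+1 by omega]
      have h3 : ∑ i ∈ Finset.range (n+1), A (i+1) * V (i+1)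
          = ∑ i ∈ Finset.range n, A ((i+1)+1) * V ((i+1)+1) + A 1 * V 1 :=
        Finset.sum_range_succ' (fun i => A (i+1) * V (i+1)) n
      have h4 : ∑ i ∈ Finset.range (n+1), A (i+1) * V (i+1)
          = ∑ i ∈ Finset.range n, A (i+1) * V (i+1) + A (n+1) * V (n+1) :=
        Finset.sum_range_succ (fun i => A (i+1) * V (i+1)) n
      have h5 : A (n+1) = 0 := coordFn_out n a (by omega)
      rw [h1, h2]
      rw [h5, zero_mul, add_zero] at h4
      linear_combination h4 - h3
    -- collect
    rw [hSum1, hSum2a, hSum2b, htel, hU2, hX1, hX2n, hXn1, hPn, hPn1, hA1, hP1, hV1, ← hUfin]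
    have hU' : ∑ i ∈ Finset.Ico 2 (n+1), V i * A i = U - A 1 * V 1 := by
      rw [hU, Finset.sum_eq_sum_Ico_succ_bot (show 1 < n+1 by omega) (fun i => A i * V i)]
      have : ∑ i ∈ Finset.Ico 2 (n+1), V i * A i = ∑ i ∈ Finset.Ico 2 (n+1), A i * V i :=
        Finset.sum_congr rfl fun i _ => mul_comm _ _
      rw [this]
      ring
    rw [hU', hA1, hV1]
    ring
  show (2 : F)⁻¹ * _ = _
  rw [key]
  field_simp

variable [Fintype F] [DecidableEq F]

lemma eMap_bijective (n : ℕ) :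
    Function.Bijective (fun p : (Fin n → F) × (Fin n → F) => eMap n p.1 p.2) := by
  rw [Fintype.bijective_iff_injective_and_card]
  constructor
  · rintro ⟨a, v⟩ ⟨a', v'⟩ h
    dsimp only at h
    have hc : ∀ m : ℕ, coordFn (2*n) (eMap n a v) m = coordFn (2*n) (eMap n a' v') m :=
      fun m => by rw [h]
    have hP : ∀ j : ℕ, j ≤ n → pSum n v j = pSum n v' j := by
      intro j hj
      rcases Nat.eq_zero_or_pos j with h0 | h1
      · rw [h0, pSum_zero, pSum_zero]
      · have e1 := coord_eMap_high a v (m := 2*n+1-j) (by omega) (by omega)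
        have e2 := coord_eMap_high a' v' (m := 2*n+1-j) (by omega) (by omega)
        rw [show 2*n+1-(2*n+1-j) = j by omega] at e1 e2
        have h3 := hc (2*n+1-j)
        rw [e1, e2] at h3
        exact neg_injective h3
    have ha : a = a' := by
      funext i
      have hi := i.isLt
      have e1 := coord_eMap_low a v (m := (i:ℕ)+1) (by omega)
      have e2 := coord_eMap_low a' v' (m := (i:ℕ)+1) (by omega)
      have h3 := hc ((i:ℕ)+1)
      rw [e1, e2, coordFn_val_succ, coordFn_val_succ] at h3
      exact h3
    have hv : v = v' := by
      funext j
      have hj := j.isLt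
      have e1 := pSum_succ_sub n v (j:ℕ)
      have e2 := pSum_succ_sub n v' (j:ℕ)
      rw [coordFn_val_succ] at e1 e2
      rw [hP ((j:ℕ)+1) (by omega), hP (j:ℕ) (by omega)] at e1
      rw [e2] at e1
      exact e1.symm
    rw [ha, hv]
  · simp only [Fintype.card_prod, Fintype.card_fun, Fintype.card_fin]
    rw [← pow_add, two_mul]

lemma addChar_map_sum {ι : Type*} (ψ : AddChar F ℂ) (s : Finset ι) (f : ι → F) :
    ψ (∑ i ∈ s, f i) = ∏ i ∈ s, ψ (f i) := by
  classical
  induction s using Finset.cons_induction with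
  | empty => simp
  | cons i s hi ih => rw [Finset.sum_cons, Finset.prod_cons, AddChar.map_add_eq_mul, ih]

lemma sum_psi_sq_aux {ψ : AddChar F ℂ} (hψ : ψ ≠ 1) (hchar : ringChar F ≠ 2) {d : F}
    (hd : d ≠ 0) :
    ∑ w : F, ψ (d * w ^ 2) = ∑ t : F, ((quadraticChar F t : ℤ) : ℂ) * ψ (d * t) := by
  have hprim : ψ.IsPrimitive := AddChar.IsPrimitive.of_ne_one hψ
  have h1 := Finset.sum_comp (s := (Finset.univ : Finset F)) (fun t => ψ (d * t))
    (fun w : F => w ^ 2)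
  rw [h1, Finset.sum_subset (Finset.subset_univ _) (fun b _ hb => by
    rw [Finset.card_eq_zero.mpr, zero_nsmul]
    rw [Finset.filter_eq_empty_iff]
    intro x _
    intro hx
    exact hb (Finset.mem_image.mpr ⟨x, Finset.mem_univ x, hx⟩))]
  have hcount : ∀ t : F, (#{a ∈ (Finset.univ : Finset F) | a ^ 2 = t} : ℂ)
      = ((quadraticChar F t : ℤ) : ℂ) + 1 := by
    intro t
    have h := quadraticChar_card_sqrts hchar t
    rw [Set.toFinset_setOf] at h
    have : ((#{a ∈ (Finset.univ : Finset F) | a ^ 2 = t} : ℤ) : ℂ)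
        = ((quadraticChar F t + 1 : ℤ) : ℂ) := by exact_mod_cast congrArg (fun z : ℤ => (z : ℂ)) h
    push_cast at this ⊢
    linear_combination this
  have hsplit : ∑ t : F, #{a ∈ (Finset.univ : Finset F) | a ^ 2 = t} • ψ (d * t)
      = ∑ t : F, (((quadraticChar F t : ℤ) : ℂ) * ψ (d * t) + ψ (d * t)) := by
    refine Finset.sum_congr rfl fun t _ => ?_
    rw [nsmul_eq_mul, hcount t]
    ring
  rw [hsplit, Finset.sum_add_distrib]
  have hzero : ∑ t : F, ψ (d * t) = 0 := by
    have := AddChar.sum_mulShift d hprim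
    rw [if_neg hd, Nat.cast_zero] at this
    rw [← this]
    exact Finset.sum_congr rfl fun t _ => by rw [mul_comm]
  rw [hzero, add_zero]

lemma sum_psi_sq {ψ : AddChar F ℂ} (hψ : ψ ≠ 1) (hchar : ringChar F ≠ 2) {c : F}
    (hc : c ≠ 0) :
    ∑ w : F, ψ (c * w ^ 2) = ((quadraticChar F c⁻¹ : ℤ) : ℂ) * ∑ t : F, ψ (t ^ 2) := by
  rw [sum_psi_sq_aux hψ hchar hc]
  have hrhs : ∑ t : F, ψ (t ^ 2) = ∑ t : F, ((quadraticChar F t : ℤ) : ℂ) * ψ t := by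
    have h := sum_psi_sq_aux hψ hchar (one_ne_zero (α := F))
    simp only [one_mul] at h
    exact h
  rw [hrhs, Finset.mul_sum]
  refine Fintype.sum_equiv (Equiv.mulLeft₀ c hc) _ _ fun t => ?_
  have hmc : quadraticChar F c⁻¹ * quadraticChar F (c * t) = quadraticChar F t := by
    rw [← map_mul, inv_mul_cancel_left₀ hc]
  have : ((quadraticChar F t : ℤ) : ℂ)
      = ((quadraticChar F c⁻¹ : ℤ) : ℂ) * ((quadraticChar F (c * t) : ℤ) : ℂ) := by
    rw [← hmc]; push_cast; ring
  rw [this]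
  show _ = ((quadraticChar F c⁻¹ : ℤ) : ℂ) * (((quadraticChar F (c * t) : ℤ) : ℂ) * ψ (c * t))
  ring

lemma sum_W {m : ℕ} {ψ : AddChar F ℂ} (hprim : ψ.IsPrimitive) (v' : Fin m → F) :
    ∑ a' : Fin m → F, ψ (∑ j, a' j * v' j)
      = ∏ j : Fin m, if v' j = 0 then (Fintype.card F : ℂ) else 0 := by
  have h1 : ∀ a' : Fin m → F, ψ (∑ j, a' j * v' j) = ∏ j, ψ (a' j * v' j) :=
    fun a' => addChar_map_sum ψ _ _
  calc ∑ a' : Fin m → F, ψ (∑ j, a' j * v' j)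
      = ∑ a' ∈ Fintype.piFinset (fun _ : Fin m => (Finset.univ : Finset F)),
          ∏ j, ψ (a' j * v' j) := by
        rw [Fintype.piFinset_univ]
        exact Finset.sum_congr rfl fun a' _ => h1 a'
    _ = ∏ j : Fin m, ∑ t : F, ψ (t * v' j) :=
        (Finset.prod_univ_sum (fun _ : Fin m => (Finset.univ : Finset F))
          (fun j t => ψ (t * v' j))).symm
    _ = ∏ j : Fin m, if v' j = 0 then (Fintype.card F : ℂ) else 0 := by
        refine Finset.prod_congr rfl fun j _ => ?_
        rw [AddChar.sum_mulShift _ hprim]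
        split_ifs <;> simp

/-- The splitting equivalence. -/
def splitEquiv (m : ℕ) :
    ((Fin m → F) × ((Fin m → F) × (F × F))) ≃ ((Fin (m+1) → F) × (Fin (m+1) → F)) where
  toFun q := (Fin.cons q.2.2.1 q.2.1, Fin.cons q.2.2.2 q.1)
  invFun p := (fun i => p.2 i.succ, (fun i => p.1 i.succ, (p.1 0, p.2 0)))
  left_inv q := by
    obtain ⟨v', a', a₀, v₀⟩ := q
    simp [Fin.cons_zero, Fin.cons_succ]
  right_inv p := by
    obtain ⟨x, y⟩ := p
    simp only [Prod.mk.injEq]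
    constructor <;> (funext i; induction i using Fin.cases <;> simp)

lemma innerSumPsi (m : ℕ) (hchar : ringChar F ≠ 2) (ψ : AddChar F ℂ) (hψ : ψ ≠ 1) :
    ∑ p : (Fin (m+1) → F) × (Fin (m+1) → F),
        ψ ((2:F)⁻¹ * ((p.1 ⟨0, Nat.succ_pos m⟩) ^ 2 + (∑ i, p.2 i) ^ 2) + ∑ j, p.1 j * p.2 j)
      = ((quadraticChar F 2 : ℤ) : ℂ) * (Fintype.card F : ℂ) ^ (m+1) * ∑ t : F, ψ (t ^ 2) := by
  have h2 : (2:F) ≠ 0 := Ring.two_ne_zero hchar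
  have hprim : ψ.IsPrimitive := AddChar.IsPrimitive.of_ne_one hψ
  rw [← Equiv.sum_comp (splitEquiv (F := F) m)
    (fun p : (Fin (m+1) → F) × (Fin (m+1) → F) =>
      ψ ((2:F)⁻¹ * ((p.1 ⟨0, Nat.succ_pos m⟩) ^ 2 + (∑ i, p.2 i) ^ 2) + ∑ j, p.1 j * p.2 j))]
  calc ∑ x : (Fin m → F) × ((Fin m → F) × (F × F)),
        ψ ((2:F)⁻¹ * (((splitEquiv (F := F) m x).1 ⟨0, Nat.succ_pos m⟩) ^ 2
            + (∑ i, (splitEquiv (F := F) m x).2 i) ^ 2)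
          + ∑ j, (splitEquiv (F := F) m x).1 j * (splitEquiv (F := F) m x).2 j)
      = ∑ v' : Fin m → F, ∑ a' : Fin m → F, ∑ a₀ : F, ∑ v₀ : F,
          ψ ((2:F)⁻¹ * (a₀ ^ 2 + (v₀ + ∑ i, v' i) ^ 2) + a₀ * v₀) * ψ (∑ j, a' j * v' j) := by
        rw [Fintype.sum_prod_type]
        refine Finset.sum_congr rfl fun v' _ => ?_
        rw [Fintype.sum_prod_type]
        refine Finset.sum_congr rfl fun a' _ => ?_
        rw [Fintype.sum_prod_type]
        refine Finset.sum_congr rfl fun a₀ _ => Finset.sum_congr rfl fun v₀ _ => ?_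
        simp only [splitEquiv, Equiv.coe_fn_mk, Fin.mk_zero, Fin.cons_zero, Fin.sum_cons,
          Fin.sum_univ_succ, Fin.cons_succ]
        rw [← AddChar.map_add_eq_mul]
        congr 1
        ring
    _ = ∑ v' : Fin m → F,
          (∑ a₀ : F, ∑ v₀ : F, ψ ((2:F)⁻¹ * (a₀ ^ 2 + (v₀ + ∑ i, v' i) ^ 2) + a₀ * v₀))
            * ∑ a' : Fin m → F, ψ (∑ j, a' j * v' j) := by
        refine Finset.sum_congr rfl fun v' _ => ?_
        rw [Finset.sum_comm]
        refine Eq.trans (Finset.sum_congr rfl fun a₀ _ => Finset.sum_comm) ?_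
        simp_rw [← Finset.mul_sum]
        rw [Finset.sum_mul]
        refine Finset.sum_congr rfl fun a₀ _ => ?_
        rw [Finset.sum_mul]
    _ = ∑ v' : Fin m → F,
          (∑ a₀ : F, ∑ v₀ : F, ψ ((2:F)⁻¹ * (a₀ ^ 2 + (v₀ + ∑ i, v' i) ^ 2) + a₀ * v₀))
            * ∏ j : Fin m, if v' j = 0 then (Fintype.card F : ℂ) else 0 := by
        refine Finset.sum_congr rfl fun v' _ => ?_
        rw [sum_W hprim v']
    _ = (∑ a₀ : F, ∑ v₀ : F, ψ ((2:F)⁻¹ * (a₀ ^ 2 + (v₀ + ∑ i, (0 : Fin m → F) i) ^ 2) + a₀ * v₀))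
          * (Fintype.card F : ℂ) ^ m := by
        rw [Finset.sum_eq_single (0 : Fin m → F)]
        · congr 1
          simp
        · intro b _ hb
          obtain ⟨j, hj⟩ := Function.ne_iff.mp hb
          have hj' : b j ≠ 0 := by simpa using hj
          rw [Finset.prod_eq_zero (Finset.mem_univ j)
            (show (if b j = 0 then (Fintype.card F : ℂ) else 0) = 0 from if_neg hj'), mul_zero]
        · intro h
          exact absurd (Finset.mem_univ _) h
    _ = ((quadraticChar F 2 : ℤ) : ℂ) * (Fintype.card F : ℂ) ^ (m+1) * ∑ t : F, ψ (t ^ 2) := by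
        have hz : (∑ i, (0 : Fin m → F) i) = 0 := by simp
        rw [hz]
        have harg : ∀ a₀ v₀ : F, (2:F)⁻¹ * (a₀ ^ 2 + (v₀ + 0) ^ 2) + a₀ * v₀
            = (2:F)⁻¹ * (a₀ + v₀) ^ 2 := by
          intro a₀ v₀
          field_simp
          ring
        have hinner : ∀ a₀ : F, ∑ v₀ : F, ψ ((2:F)⁻¹ * (a₀ ^ 2 + (v₀ + 0) ^ 2) + a₀ * v₀)
            = ∑ w : F, ψ ((2:F)⁻¹ * w ^ 2) := by
          intro a₀
          refine Fintype.sum_equiv (Equiv.addLeft a₀) _ _ fun v₀ => ?_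
          rw [harg]
          rfl
        simp_rw [hinner]
        rw [Finset.sum_const, Finset.card_univ, nsmul_eq_mul,
          sum_psi_sq hψ hchar (inv_ne_zero h2), inv_inv]
        rw [pow_succ]
        ring

end Aux

/-- `Σ_{x ∈ 𝔽_q^{2n}} ψ(Q^{Sp}_n(x)) = χ(2)·qⁿ·G(ψ)`, where
`Q^{Sp}_n(x) = h^{Sp}_n(x,x)` is the form attached to the symplectic group `Sp_{2n}`,
`χ` is the quadratic character of `𝔽_q^×` and `G(ψ) = Σ_t ψ(t²)`. -/
theorem gauss_sum_hSp_eq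
    (F : Type) [Field F] [Fintype F] [DecidableEq F]
    (hodd : Odd (Fintype.card F))
    (ψ : AddChar F ℂ) (hψ : ψ ≠ 1)
    (n : ℕ) (hn : 1 ≤ n) :
    ∑ x : Fin (2 * n) → F, ψ (hSp n x x)
      = ((quadraticChar F 2 : ℤ) : ℂ) * (Fintype.card F : ℂ) ^ n
          * ∑ t : F, ψ (t ^ 2) := by
  obtain ⟨m, rfl⟩ : ∃ m, n = m + 1 := ⟨n - 1, by omega⟩
  have hchar : ringChar F ≠ 2 := by
    intro h
    have h0 := FiniteField.even_card_iff_char_two.mp h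
    rcases hodd with ⟨k, hk⟩
    omega
  have h2 : (2:F) ≠ 0 := Ring.two_ne_zero hchar
  have hbij := eMap_bijective (F := F) (m+1)
  rw [← Fintype.sum_bijective _ hbij
    (fun p : (Fin (m+1) → F) × (Fin (m+1) → F) =>
      ψ (hSp (m+1) (eMap (m+1) p.1 p.2) (eMap (m+1) p.1 p.2)))
    (fun x => ψ (hSp (m+1) x x)) (fun p => rfl)]
  have hpt : ∀ p : (Fin (m+1) → F) × (Fin (m+1) → F),
      ψ (hSp (m+1) (eMap (m+1) p.1 p.2) (eMap (m+1) p.1 p.2))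
        = ψ ((2:F)⁻¹ * ((p.1 ⟨0, Nat.succ_pos m⟩) ^ 2 + (∑ i, p.2 i) ^ 2)
            + ∑ j, p.1 j * p.2 j) :=
    fun p => by rw [hSp_eMap (Nat.succ_le_succ (Nat.zero_le m)) h2]
  rw [Finset.sum_congr rfl fun p _ => hpt p]
  exact innerSumPsi m hchar ψ hψ
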